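/- arXiv:2604.11729 — 3 statements merged into one kernel-verified Lean document; each statement's English description precedes it below -/
import Mathlib

section
/- Every 2-edge-connected multigraph α with at least 2 vertices and a distinguished root vertex contains a path π = (u_1, ..., u_k) with k ≥ 2 such that: each internal vertex u_2, ..., u_{k-1} has degree 2 in α; no internal vertex equals the root; the vertices u_1, ..., u_k are pairwise distinct except possibly u_1 = u_k; and removing the internal vertices and edges of π from α leaves a 2-edge-connected graph. -/
/-- A finite multigraph: finite types of vertices and edges and an endpoint map.
Loops and parallel edges are allowed. -/
structure Multigraph where
  V : Type
  E : Type
  [fintypeV : Fintype V]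
  [fintypeE : Fintype E]
  [decV : DecidableEq V]
  ends : E → V × V

attribute [instance] Multigraph.fintypeV Multigraph.fintypeE Multigraph.decV

namespace Multigraph

/-- The degree of a vertex; a self-loop contributes 2. -/
def degree (G : Multigraph) (v : G.V) : ℕ :=
  ∑ e : G.E,
    (if G.ends e = (v, v) then 2
     else if (G.ends e).1 = v ∨ (G.ends e).2 = v then 1 else 0)

/-- Reachability using only edges in the set `S`. -/
def ReachableOn (G : Multigraph) (S : Set G.E) : G.V → G.V → Prop :=
  Relation.ReflTransGen (fun x y => ∃ e ∈ S, G.ends e = (x, y) ∨ G.ends e = (y, x))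

/-- The subgraph on the vertex set `VS` with edge set `ES` is 2-edge-connected:
all edges of `ES` join vertices of `VS`, any two vertices of `VS` are joined by a
walk in `ES`, and no edge of `ES` is a bridge of this subgraph. -/
def TwoEdgeConnectedOn (G : Multigraph) (VS : Set G.V) (ES : Set G.E) : Prop :=
  (∀ e ∈ ES, (G.ends e).1 ∈ VS ∧ (G.ends e).2 ∈ VS) ∧
  (∀ x ∈ VS, ∀ y ∈ VS, G.ReachableOn ES x y) ∧
  (∀ e ∈ ES, G.ReachableOn (ES \ {e}) (G.ends e).1 (G.ends e).2)

/-- The whole multigraph is 2-edge-connected. -/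
def TwoEdgeConnected (G : Multigraph) : Prop :=
  G.TwoEdgeConnectedOn Set.univ Set.univ

end Multigraph

/-!
Start from the root alone and grow a 2-edge-connected subgraph by ears. An ear of the current
subgraph is an edge `g` leaving it, followed by a shortest path back to the subgraph in the graph
minus `g`, which exists because `g` is not a bridge; adding an ear keeps the subgraph
2-edge-connected. A maximal proper such subgraph is completed by any of its ears, so that last
ear carries every edge outside the subgraph. Its internal vertices, which lie outside the
subgraph, therefore meet only the two ear edges through them and have degree 2, and removing
the ear leaves the 2-edge-connected subgraph.
-/

namespace Multigraph

def Links (G : Multigraph) (f : G.E) (x y : G.V) : Prop :=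
  G.ends f = (x, y) ∨ G.ends f = (y, x)

/-- A walk of length `m` along edges of `S`, encoded by sequences of which only
`u 0, …, u m` and `e 0, …, e (m - 1)` matter. -/
def IsWalkOn (G : Multigraph) (S : Set G.E) (m : ℕ) (u : ℕ → G.V) (e : ℕ → G.E) : Prop :=
  ∀ i < m, e i ∈ S ∧ G.Links (e i) (u i) (u (i + 1))

variable {G : Multigraph}

lemma Links.symm {f : G.E} {x y : G.V} (h : G.Links f x y) : G.Links f y x := Or.symm h

lemma Links.reachableOn {S : Set G.E} {f : G.E} {x y : G.V} (hf : f ∈ S) (h : G.Links f x y) :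
    G.ReachableOn S x y :=
  Relation.ReflTransGen.single ⟨f, hf, h⟩

lemma ReachableOn.mono {S T : Set G.E} (hST : S ⊆ T) {x y : G.V} (h : G.ReachableOn S x y) :
    G.ReachableOn T x y :=
  Relation.ReflTransGen.mono (fun _ _ ⟨f, hf, hl⟩ => ⟨f, hST hf, hl⟩) _ _ h

lemma ReachableOn.symm {S : Set G.E} {x y : G.V} (h : G.ReachableOn S x y) :
    G.ReachableOn S y x := by
  induction h with
  | refl => exact Relation.ReflTransGen.refl
  | tail _ hstep ih =>
    obtain ⟨f, hf, hl⟩ := hstep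
    exact Relation.ReflTransGen.head ⟨f, hf, Links.symm hl⟩ ih

lemma ReachableOn.trans {S : Set G.E} {x y z : G.V} (hxy : G.ReachableOn S x y)
    (hyz : G.ReachableOn S y z) : G.ReachableOn S x z :=
  Relation.ReflTransGen.trans hxy hyz

lemma Links.reachableOn_ends_iff {S : Set G.E} {f : G.E} {x y : G.V} (hf : G.Links f x y) :
    G.ReachableOn S (G.ends f).1 (G.ends f).2 ↔ G.ReachableOn S x y := by
  rcases hf with hf | hf
  · rw [hf]
  · rw [hf]
    exact ⟨ReachableOn.symm, ReachableOn.symm⟩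

lemma ReachableOn.mem_of_iff {S : Set G.E} {A : Set G.V}
    (hA : ∀ f ∈ S, (G.ends f).1 ∈ A ↔ (G.ends f).2 ∈ A) {x y : G.V}
    (h : G.ReachableOn S x y) (hx : x ∈ A) : y ∈ A := by
  induction h with
  | refl => exact hx
  | tail _ hstep ih =>
    obtain ⟨f, hf, hl | hl⟩ := hstep
    · simpa [hl] using (hA f hf).1 (by simpa [hl] using ih)
    · simpa [hl] using (hA f hf).2 (by simpa [hl] using ih)

lemma ReachableOn.nonempty_of_ne {S : Set G.E} {x y : G.V} (h : G.ReachableOn S x y)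
    (hne : x ≠ y) : S.Nonempty := by
  obtain rfl | ⟨_, ⟨f, hf, -⟩, -⟩ := h.cases_head
  exacts [absurd rfl hne, ⟨f, hf⟩]

lemma TwoEdgeConnected.eq_univ_of_forall_ends_mem (hG : G.TwoEdgeConnected) {A : Set G.V}
    (hA : ∀ f, (G.ends f).1 ∈ A ∧ (G.ends f).2 ∈ A) {x : G.V} (hx : x ∈ A) :
    A = Set.univ :=
  Set.eq_univ_of_forall fun y => (hG.2.1 x trivial y trivial).mem_of_iff
    (fun f _ => iff_of_true (hA f).1 (hA f).2) hx

lemma twoEdgeConnectedOn_singleton_empty (x : G.V) : G.TwoEdgeConnectedOn {x} ∅ :=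
  ⟨by simp, by rintro _ rfl _ rfl; exact Relation.ReflTransGen.refl, by simp⟩

lemma degree_eq_sum (v : G.V) : G.degree v =
    ∑ f, ((if (G.ends f).1 = v then 1 else 0) + (if (G.ends f).2 = v then 1 else 0)) := by
  refine Finset.sum_congr rfl fun f _ => ?_
  rcases G.ends f with ⟨x, y⟩
  simp only [Prod.mk.injEq]
  split_ifs <;> simp_all

lemma Links.incidence_eq {f : G.E} {x y : G.V} (h : G.Links f x y) (v : G.V) :
    (if (G.ends f).1 = v then 1 else 0) + (if (G.ends f).2 = v then 1 else 0) =
      (if x = v then 1 else 0) + (if y = v then 1 else 0) := by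
  rcases h with h | h <;> simp only [h]
  exact add_comm _ _

lemma reachableOn_of_links {T : Set G.E} {u : ℕ → G.V} {e : ℕ → G.E} {i j : ℕ}
    (hij : i ≤ j)
    (h : ∀ k, i ≤ k → k < j → e k ∈ T ∧ G.Links (e k) (u k) (u (k + 1))) :
    G.ReachableOn T (u i) (u j) := by
  induction j, hij using Nat.le_induction with
  | base => exact Relation.ReflTransGen.refl
  | succ j hij ih =>
    obtain ⟨hT, hl⟩ := h j hij j.lt_succ_self
    exact (ih fun k hik hkj => h k hik (by omega)).trans (hl.reachableOn hT)

lemma ReachableOn.exists_walk [Nonempty G.E] {S : Set G.E} {x y : G.V}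
    (h : G.ReachableOn S x y) : ∃ m u e, G.IsWalkOn S m u e ∧ u 0 = x ∧ u m = y := by
  induction h with
  | refl => exact ⟨0, fun _ => x, fun _ => Classical.arbitrary _, by simp [IsWalkOn], rfl, rfl⟩
  | @tail y z _ hstep ih =>
    obtain ⟨m, u, e, hw, hu0, hum⟩ := ih
    obtain ⟨f, hf, hl⟩ := hstep
    refine ⟨m + 1, fun k => if k ≤ m then u k else z, fun k => if k < m then e k else f,
      fun k hk => ?_, by simp [hu0], by simp⟩
    rcases Nat.lt_or_ge k m with hkm | hkm
    · simpa [hkm, hkm.le, Nat.succ_le_of_lt hkm] using hw k hkm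
    · obtain rfl : k = m := by omega
      simpa [hum] using (⟨hf, hl⟩ : f ∈ S ∧ G.Links f y z)

lemma IsWalkOn.exists_shortcut {S : Set G.E} {m : ℕ} {u : ℕ → G.V} {e : ℕ → G.E}
    (h : G.IsWalkOn S m u e) {i j : ℕ} (hij : i ≤ j) (hjm : j ≤ m) (hu : u i = u j) :
    ∃ u' e', G.IsWalkOn S (m - (j - i)) u' e' ∧ u' 0 = u 0 ∧ u' (m - (j - i)) = u m := by
  -- skip the closed subwalk from position `i` to position `j`
  let σ : ℕ → ℕ := fun k => if k < i then k else k + (j - i)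
  have hσ : ∀ k, u (σ k + 1) = u (σ (k + 1)) := by
    intro k
    rcases lt_trichotomy (k + 1) i with hk | hk | hk
    · simp [σ, hk, Nat.lt_of_succ_lt hk]
    · subst hk
      simp [σ, show k + 1 + (j - (k + 1)) = j by omega, hu]
    · simp [σ, show ¬ k < i by omega, show ¬ k + 1 < i by omega, Nat.add_right_comm]
  refine ⟨u ∘ σ, e ∘ σ, fun k hk => ?_, ?_, ?_⟩
  · obtain ⟨hS, hl⟩ := h (σ k) (by simp only [σ]; split_ifs <;> omega)
    exact ⟨hS, by simpa only [Function.comp_apply, ← hσ k] using hl⟩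
  · rcases Nat.eq_zero_or_pos i with rfl | hi
    · simp [σ, hu]
    · simp [σ, hi]
  · simp [σ, show ¬ m - (j - i) < i by omega, show m - (j - i) + (j - i) = m by omega]

lemma ReachableOn.exists_path_to_set [Nonempty G.E] {S : Set G.E} {A : Set G.V} {x y : G.V}
    (h : G.ReachableOn S x y) (hy : y ∈ A) :
    ∃ m u e, G.IsWalkOn S m u e ∧ u 0 = x ∧ u m ∈ A ∧ (∀ i < m, u i ∉ A) ∧
      Set.InjOn u (Set.Iic m) := by
  classical
  have hex : ∃ m u e, G.IsWalkOn S m u e ∧ u 0 = x ∧ u m ∈ A := by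
    obtain ⟨m, u, e, hw, hx, rfl⟩ := h.exists_walk
    exact ⟨m, u, e, hw, hx, hy⟩
  obtain ⟨u, e, hw, hx, hA⟩ := Nat.find_spec hex
  refine ⟨Nat.find hex, u, e, hw, hx, hA, fun i hi hiA => ?_, ?_⟩
  · exact Nat.find_min hex hi ⟨u, e, fun k hk => hw k (by omega), hx, hiA⟩
  · intro i hi j hj hu
    by_contra hne
    wlog hlt : i < j generalizing i j
    · exact this hj hi hu.symm (Ne.symm hne) (by omega)
    obtain ⟨u', e', hw', hx', hA'⟩ := hw.exists_shortcut hlt.le hj hu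
    have hjm : j ≤ Nat.find hex := hj
    exact Nat.find_min hex (show Nat.find hex - (j - i) < Nat.find hex by omega)
      ⟨u', e', hw', hx' ▸ hx, hA' ▸ hA⟩

lemma IsWalkOn.injOn_edge {S : Set G.E} {m : ℕ} {u : ℕ → G.V} {e : ℕ → G.E}
    (h : G.IsWalkOn S m u e) (hu : Set.InjOn u (Set.Iic m)) : Set.InjOn e (Set.Iio m) := by
  intro k hk l hl hkl
  by_contra hne
  wlog hlt : k < l generalizing k l
  · exact this hl hk hkl.symm (Ne.symm hne) (by omega)
  simp only [Set.mem_Iio] at hk hl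
  have hends : u k = u l ∨ u k = u (l + 1) := by
    rcases (h k hk).2 with h1 | h1 <;> rcases (h l hl).2 with h2 | h2 <;>
      rw [hkl, h2] at h1 <;> simp only [Prod.mk.injEq] at h1 <;> tauto
  rcases hends with h' | h'
  · exact hne (hu (by simp; omega) (by simp; omega) h')
  · exact absurd (hu (by simp; omega) (by simp; omega) h') (by omega)

/-- An ear of the subgraph `(VS, ES)` with internal vertices `u 1, …, u n`. -/
structure IsEar (G : Multigraph) (VS : Set G.V) (ES : Set G.E) (n : ℕ) (u : ℕ → G.V)
    (e : ℕ → G.E) : Prop where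
  isWalkOn : G.IsWalkOn ESᶜ (n + 1) u e
  injOn_edge : Set.InjOn e (Set.Iio (n + 1))
  start_mem : u 0 ∈ VS
  end_mem : u (n + 1) ∈ VS
  internal_notMem : ∀ i ∈ Set.Ioo 0 (n + 1), u i ∉ VS
  injOn_internal : Set.InjOn u (Set.Ioo 0 (n + 1))

namespace IsEar

variable {VS : Set G.V} {ES : Set G.E} {n : ℕ} {u : ℕ → G.V} {e : ℕ → G.E}

lemma vert_mem (hear : G.IsEar VS ES n u e) {k : ℕ} (hk : k ≤ n + 1) :
    u k ∈ VS ∪ u '' Set.Ioo 0 (n + 1) := by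
  rcases Nat.eq_zero_or_pos k with rfl | hk0
  · exact Or.inl hear.start_mem
  rcases hk.eq_or_lt with rfl | hkn
  · exact Or.inl hear.end_mem
  · exact Or.inr ⟨k, ⟨hk0, hkn⟩, rfl⟩

lemma vert_eq_internal_iff (hear : G.IsEar VS ES n u e) {i k : ℕ}
    (hi : i ∈ Set.Ioo 0 (n + 1)) (hk : k ≤ n + 1) : u k = u i ↔ k = i := by
  refine ⟨fun h => ?_, fun h => h ▸ rfl⟩
  rcases Nat.eq_zero_or_pos k with rfl | hk0
  · exact absurd (h ▸ hear.start_mem) (hear.internal_notMem i hi)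
  rcases hk.eq_or_lt with rfl | hkn
  · exact absurd (h ▸ hear.end_mem) (hear.internal_notMem i hi)
  · exact hear.injOn_internal ⟨hk0, hkn⟩ hi h

lemma eq_or_ends_of_vert_eq (hear : G.IsEar VS ES n u e) {i j : ℕ} (hi : i ≤ n + 1)
    (hj : j ≤ n + 1) (h : u i = u j) :
    i = j ∨ (i = 0 ∧ j = n + 1) ∨ (j = 0 ∧ i = n + 1) := by
  by_cases hj' : j ∈ Set.Ioo 0 (n + 1)
  · exact Or.inl ((hear.vert_eq_internal_iff hj' hi).1 h)
  by_cases hi' : i ∈ Set.Ioo 0 (n + 1)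
  · exact Or.inl ((hear.vert_eq_internal_iff hi' hj).1 h.symm).symm
  simp only [Set.mem_Ioo, not_and_or, not_lt] at hi' hj'
  omega

lemma degree_eq_two (hear : G.IsEar VS ES n u e)
    (hends : ∀ f ∈ ES, (G.ends f).1 ∈ VS ∧ (G.ends f).2 ∈ VS)
    (hcover : ES ∪ e '' Set.Iio (n + 1) = Set.univ) {i : ℕ} (hi : i ∈ Set.Ioo 0 (n + 1)) :
    G.degree (u i) = 2 := by
  classical
  have hES : ∀ f ∈ ES,
      (if (G.ends f).1 = u i then 1 else 0) + (if (G.ends f).2 = u i then 1 else 0) = 0 := by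
    intro f hf
    have hui := hear.internal_notMem i hi
    simp [show (G.ends f).1 ≠ u i from fun h => hui (h ▸ (hends f hf).1),
      show (G.ends f).2 ≠ u i from fun h => hui (h ▸ (hends f hf).2)]
  have hEar : ∀ f ∉ (Finset.range (n + 1)).image e, f ∈ ES := by
    intro f hf
    obtain hf' | ⟨k, hk, rfl⟩ := hcover.symm ▸ Set.mem_univ f
    exacts [hf', absurd (Finset.mem_image_of_mem e (Finset.mem_range.2 hk)) hf]
  have hi' : i < n + 1 := hi.2
  rw [degree_eq_sum, ← Finset.sum_subset (Finset.subset_univ _) fun f _ hf => hES f (hEar f hf),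
    Finset.sum_image fun k hk l hl => hear.injOn_edge (by simpa using hk) (by simpa using hl)]
  calc ∑ k ∈ Finset.range (n + 1),
        ((if (G.ends (e k)).1 = u i then 1 else 0) + (if (G.ends (e k)).2 = u i then 1 else 0))
      = ∑ k ∈ Finset.range (n + 1),
          ((if k = i then 1 else 0) + (if k = i - 1 then 1 else 0)) := by
        refine Finset.sum_congr rfl fun k hk => ?_
        have hk : k < n + 1 := Finset.mem_range.1 hk
        rw [(hear.isWalkOn k hk).2.incidence_eq]
        simp only [hear.vert_eq_internal_iff hi (show k ≤ n + 1 by omega),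
          hear.vert_eq_internal_iff hi (show k + 1 ≤ n + 1 by omega),
          show k + 1 = i ↔ k = i - 1 by have := hi.1; omega]
    _ = 2 := by
        rw [Finset.sum_add_distrib, Finset.sum_ite_eq', Finset.sum_ite_eq']
        simp [Finset.mem_range, hi', hi'.le]

end IsEar

lemma TwoEdgeConnectedOn.union_ear {VS : Set G.V} {ES : Set G.E} {n : ℕ} {u : ℕ → G.V}
    {e : ℕ → G.E} (h : G.TwoEdgeConnectedOn VS ES) (hear : G.IsEar VS ES n u e) :
    G.TwoEdgeConnectedOn (VS ∪ u '' Set.Ioo 0 (n + 1)) (ES ∪ e '' Set.Iio (n + 1)) := by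
  obtain ⟨hends, hconn, hbridge⟩ := h
  have hlinks : ∀ k < n + 1, G.Links (e k) (u k) (u (k + 1)) := fun k hk =>
    (hear.isWalkOn k hk).2
  have hstart : ∀ x ∈ VS ∪ u '' Set.Ioo 0 (n + 1),
      G.ReachableOn (ES ∪ e '' Set.Iio (n + 1)) (u 0) x := by
    rintro x (hx | ⟨i, hi, rfl⟩)
    · exact (hconn _ hear.start_mem x hx).mono Set.subset_union_left
    · have hin : i < n + 1 := hi.2
      exact reachableOn_of_links (Nat.zero_le i) fun k _ hk =>
        ⟨Or.inr ⟨k, show k < n + 1 by omega, rfl⟩, hlinks k (by omega)⟩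
  refine ⟨?_, fun x hx y hy => (hstart x hx).symm.trans (hstart y hy), ?_⟩
  · rintro f (hf | ⟨k, hk, rfl⟩)
    · exact ⟨Or.inl (hends f hf).1, Or.inl (hends f hf).2⟩
    · have h0 := hear.vert_mem (k := k) (by simp at hk; omega)
      have h1 := hear.vert_mem (k := k + 1) (by simp at hk; omega)
      rcases hlinks k hk with hl | hl <;> rw [hl]
      exacts [⟨h0, h1⟩, ⟨h1, h0⟩]
  · rintro f (hf | ⟨k, hk, rfl⟩)
    · exact (hbridge f hf).mono (Set.sdiff_subset_sdiff_left Set.subset_union_left)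
    · -- go around: back along the ear to `u 0`, through `ES`, and back along the ear
      have hk' : k < n + 1 := hk
      have hother : ∀ l < n + 1, l ≠ k →
          e l ∈ (ES ∪ e '' Set.Iio (n + 1)) \ {e k} := fun l hl hlk =>
        ⟨Or.inr ⟨l, hl, rfl⟩, fun hlk' => hlk (hear.injOn_edge hl hk hlk')⟩
      have hback : G.ReachableOn ((ES ∪ e '' Set.Iio (n + 1)) \ {e k}) (u 0) (u k) :=
        reachableOn_of_links (Nat.zero_le k) fun l _ hl =>
          ⟨hother l (by omega) (by omega), hlinks l (by omega)⟩
      have hforth : G.ReachableOn ((ES ∪ e '' Set.Iio (n + 1)) \ {e k}) (u (k + 1)) (u (n + 1)) :=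
        reachableOn_of_links (by omega) fun l hl hl' =>
          ⟨hother l hl' (by omega), hlinks l hl'⟩
      have hES : G.ReachableOn ((ES ∪ e '' Set.Iio (n + 1)) \ {e k}) (u 0) (u (n + 1)) :=
        (hconn _ hear.start_mem _ hear.end_mem).mono fun f hf =>
          show f ∈ (ES ∪ e '' Set.Iio (n + 1)) \ {e k} from
            ⟨Or.inl hf, fun hfk => (hear.isWalkOn k hk').1 (hfk ▸ hf)⟩
      exact (hlinks k hk').reachableOn_ends_iff.2 (hback.symm.trans (hES.trans hforth.symm))

lemma TwoEdgeConnected.exists_links_of_ne_univ (hG : G.TwoEdgeConnected) {VS : Set G.V}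
    {ES : Set G.E} (hends : ∀ f ∈ ES, (G.ends f).1 ∈ VS ∧ (G.ends f).2 ∈ VS) {x : G.V}
    (hx : x ∈ VS) (hES : ES ≠ Set.univ) : ∃ g ∉ ES, ∃ a ∈ VS, ∃ b, G.Links g a b := by
  by_contra! hcon
  have hclosed : ∀ f ∈ (Set.univ : Set G.E), (G.ends f).1 ∈ VS ↔ (G.ends f).2 ∈ VS := by
    intro f _
    by_cases hf : f ∈ ES
    · exact iff_of_true (hends f hf).1 (hends f hf).2
    · exact iff_of_false (fun h => hcon f hf _ h _ (Or.inl rfl))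
        (fun h => hcon f hf _ h _ (Or.inr rfl))
  obtain ⟨g, hg⟩ := (Set.ne_univ_iff_exists_notMem ES).1 hES
  exact hcon g hg _ ((hG.2.1 x trivial _ trivial).mem_of_iff hclosed hx) _ (Or.inl rfl)

lemma TwoEdgeConnected.exists_ear (hG : G.TwoEdgeConnected) {VS : Set G.V} {ES : Set G.E}
    (h : G.TwoEdgeConnectedOn VS ES) {x : G.V} (hx : x ∈ VS) (hES : ES ≠ Set.univ) :
    ∃ n u e, G.IsEar VS ES n u e := by
  obtain ⟨g, hg, a, ha, b, hab⟩ := hG.exists_links_of_ne_univ h.1 hx hES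
  have : Nonempty G.E := ⟨g⟩
  have hba : G.ReachableOn (Set.univ \ {g}) b a :=
    (hab.reachableOn_ends_iff.1 (hG.2.2 g trivial)).symm
  obtain ⟨m, p, q, hw, rfl, hpm, hpA, hinj⟩ := hba.exists_path_to_set (A := VS) ha
  have hq : ∀ j < m, q j ∉ ES ∧ q j ≠ g := fun j hj =>
    ⟨fun hES => hpA j hj (by
      have hends := h.1 _ hES
      rcases (hw j hj).2 with h' | h' <;> rw [h'] at hends
      exacts [hends.1, hends.2]), (hw j hj).1.2⟩
  refine ⟨m, fun k => if k = 0 then a else p (k - 1), fun k => if k = 0 then g else q (k - 1),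
    ⟨fun k hk => ?_, ?_, by simpa using ha, by simpa using hpm, ?_, ?_⟩⟩
  · rcases k with _ | j
    · simpa using ⟨hg, hab⟩
    · simpa using ⟨(hq j (by omega)).1, (hw j (by omega)).2⟩
  · rintro (_ | k) hk (_ | l) hl hkl
    · rfl
    · exact absurd hkl.symm (by simpa using (hq l (by simp at hl; omega)).2)
    · exact absurd hkl (by simpa using (hq k (by simp at hk; omega)).2)
    · simpa using hw.injOn_edge hinj (by simp at hk ⊢; omega) (by simp at hl ⊢; omega)
        (by simpa using hkl)
  · rintro (_ | j) ⟨h0, hj⟩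
    · exact absurd h0 (lt_irrefl 0)
    · simpa using hpA j (by omega)
  · rintro (_ | i) ⟨hi0, hi⟩ (_ | j) ⟨hj0, hj⟩ hij
    all_goals try omega
    simpa using hinj (Set.mem_Iic.2 (by omega)) (Set.mem_Iic.2 (by omega)) (by simpa using hij)

lemma TwoEdgeConnected.exists_last_ear [Nonempty G.E] (hG : G.TwoEdgeConnected) (r : G.V) :
    ∃ VS ES n u e, r ∈ VS ∧ G.TwoEdgeConnectedOn VS ES ∧ G.IsEar VS ES n u e ∧
      ES ∪ e '' Set.Iio (n + 1) = Set.univ := by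
  -- a maximal proper 2-edge-connected subgraph containing `r` is completed by any of its ears
  let F : Set (Set G.E) :=
    {ES | ∃ VS, r ∈ VS ∧ G.TwoEdgeConnectedOn VS ES ∧ ES ≠ Set.univ}
  have hbase : ∅ ∈ F := ⟨{r}, rfl, twoEdgeConnectedOn_singleton_empty r, Set.empty_ne_univ⟩
  obtain ⟨ES, ⟨VS, hr, h, hES⟩, hmax⟩ := F.toFinite.exists_maximal ⟨∅, hbase⟩
  obtain ⟨n, u, e, hear⟩ := hG.exists_ear h hr hES
  refine ⟨VS, ES, n, u, e, hr, h, hear, ?_⟩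
  by_contra hne
  have hgrow := hmax ⟨_, Or.inl hr, h.union_ear hear, hne⟩ Set.subset_union_left
  exact (hear.isWalkOn 0 n.succ_pos).1 (hgrow (Or.inr ⟨0, n.succ_pos, rfl⟩))

end Multigraph

/-- Every 2-edge-connected multigraph with at least 2 vertices and a distinguished
root vertex contains a path `π = (u 0, …, u (n+1))` (so of length `k = n + 2 ≥ 2`)
whose internal vertices have degree 2 in the graph, avoid the root, and whose
vertices are pairwise distinct except possibly the two endpoints; moreover,
removing the internal vertices and the edges of `π` leaves a 2-edge-connected
graph. -/
theorem Multigraph.ear_decomposition (G : Multigraph) (r : G.V)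
    (hcard : 2 ≤ Fintype.card G.V) (hG : G.TwoEdgeConnected) :
    ∃ (n : ℕ) (u : Fin (n + 2) → G.V) (e : Fin (n + 1) → G.E),
      (∀ i : Fin (n + 1),
        G.ends (e i) = (u i.castSucc, u i.succ) ∨
        G.ends (e i) = (u i.succ, u i.castSucc)) ∧
      Function.Injective e ∧
      (∀ i : Fin (n + 2), 0 < i.val → i.val < n + 1 → G.degree (u i) = 2) ∧
      (∀ i : Fin (n + 2), 0 < i.val → i.val < n + 1 → u i ≠ r) ∧
      (∀ i j : Fin (n + 2), u i = u j →
        i = j ∨ (i.val = 0 ∧ j.val = n + 1) ∨ (j.val = 0 ∧ i.val = n + 1)) ∧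
      G.TwoEdgeConnectedOn
        {x : G.V | ∀ i : Fin (n + 2), 0 < i.val → i.val < n + 1 → x ≠ u i}
        {f : G.E | ∀ i : Fin (n + 1), f ≠ e i} := by
  obtain ⟨v, hv⟩ := Fintype.exists_ne_of_one_lt_card hcard r
  have : Nonempty G.E := ((hG.2.1 r trivial v trivial).nonempty_of_ne hv.symm).to_subtype.map (↑)
  obtain ⟨VS, ES, n, u, e, hr, h, hear, hcover⟩ := hG.exists_last_ear r
  have hVS : VS ∪ u '' Set.Ioo 0 (n + 1) = Set.univ :=
    hG.eq_univ_of_forall_ends_mem (fun f => (h.union_ear hear).1 f (hcover ▸ trivial)) (Or.inl hr)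
  refine ⟨n, fun i => u i, fun i => e i, fun i => (hear.isWalkOn i i.isLt).2,
    fun i j hij => Fin.ext (hear.injOn_edge i.isLt j.isLt hij),
    fun i h0 h1 => hear.degree_eq_two h.1 hcover ⟨h0, h1⟩,
    fun i h0 h1 hri => hear.internal_notMem i ⟨h0, h1⟩ (by rwa [show u i = r from hri]),
    fun i j hij => (hear.eq_or_ends_of_vert_eq (by omega) (by omega) hij).imp_left Fin.ext, ?_⟩
  convert h using 1
  · ext x
    refine ⟨fun hx => ?_, fun hx i h0 h1 hxi =>
      hear.internal_notMem i ⟨h0, h1⟩ ((show x = u i from hxi) ▸ hx)⟩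
    obtain hx' | ⟨i, hi, rfl⟩ := hVS.symm ▸ Set.mem_univ x
    exacts [hx', absurd rfl (hx ⟨i, by have := hi.2; omega⟩ hi.1 hi.2)]
  · ext f
    refine ⟨fun hf => ?_, fun hf i hfi =>
      (hear.isWalkOn i i.isLt).1 ((show f = e i from hfi) ▸ hf)⟩
    obtain hf' | ⟨k, hk, rfl⟩ := hcover.symm ▸ Set.mem_univ f
    exacts [hf', absurd rfl (hf ⟨k, hk⟩)]
end

section
/- For perfect matchings α, β of {1, ..., k} (k even), define Δ(α, β) as the minimum number of swap operations needed to transform α into β, where a swap replaces pairs {a,b},{c,d} by {a,c},{b,d}. Then Δ(α, β) = k/2 - |cyc(α, β)|, where cyc(α, β) is the set of cycles formed by the multigraph union of α and β on vertex set {1,...,k}. -/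
set_option linter.unusedSectionVars false

open Relation

lemma eg_symm {X : Type} {r : X → X → Prop} {a b : X} (h : EqvGen r a b) : EqvGen r b a :=
  EqvGen.symm a b h

lemma eg_trans {X : Type} {r : X → X → Prop} {a b c : X} (h1 : EqvGen r a b)
    (h2 : EqvGen r b c) : EqvGen r a c :=
  EqvGen.trans a b c h1 h2

section QuotLemmas
variable {X : Type} [Finite X]

/-- `r` augmented with one extra pair `(a,b)`. -/
def rpair (r : X → X → Prop) (a b : X) : X → X → Prop :=
  fun x y => r x y ∨ (x = a ∧ y = b)

lemma card_quot_le {r s : X → X → Prop} (h : ∀ i j, r i j → EqvGen s i j) :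
    Nat.card (Quot s) ≤ Nat.card (Quot r) := by
  apply Nat.card_le_card_of_surjective
    (Quot.lift (Quot.mk s) (fun i j hij => Quot.eqvGen_sound (h i j hij)))
  intro q
  exact ⟨Quot.mk r q.out, q.out_eq⟩

lemma nat_card_option (Y : Type) [Finite Y] : Nat.card (Option Y) = Nat.card Y + 1 := by
  rw [Nat.card_eq_of_bijective _ (Equiv.optionEquivSumPUnit.{0,0} Y).bijective, Nat.card_sum]
  simp

lemma eqvGen_rpair_elim {r : X → X → Prop} {a b i j : X}
    (h : EqvGen (rpair r a b) i j) :
    EqvGen r i j ∨ (EqvGen r i a ∧ EqvGen r b j) ∨ (EqvGen r i b ∧ EqvGen r a j) := by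
  induction h with
  | rel x y hxy =>
    rcases hxy with h | ⟨rfl, rfl⟩
    · exact Or.inl (EqvGen.rel _ _ h)
    · exact Or.inr (Or.inl ⟨EqvGen.refl _, EqvGen.refl _⟩)
  | refl x => exact Or.inl (EqvGen.refl _)
  | symm x y _ ih =>
    rcases ih with h | ⟨h1, h2⟩ | ⟨h1, h2⟩
    · exact Or.inl (eg_symm h)
    · exact Or.inr (Or.inr ⟨eg_symm h2, eg_symm h1⟩)
    · exact Or.inr (Or.inl ⟨eg_symm h2, eg_symm h1⟩)
  | trans x y z _ _ ih1 ih2 =>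
    rcases ih1 with h | ⟨h1, h2⟩ | ⟨h1, h2⟩ <;>
      rcases ih2 with h' | ⟨h1', h2'⟩ | ⟨h1', h2'⟩
    · exact Or.inl (eg_trans h h')
    · exact Or.inr (Or.inl ⟨eg_trans h h1', h2'⟩)
    · exact Or.inr (Or.inr ⟨eg_trans h h1', h2'⟩)
    · exact Or.inr (Or.inl ⟨h1, eg_trans h2 h'⟩)
    · exact Or.inl (eg_trans (eg_trans h1 (eg_symm (eg_trans h2 h1'))) h2')
    · exact Or.inl (eg_trans h1 h2')
    · exact Or.inr (Or.inr ⟨h1, eg_trans h2 h'⟩)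
    · exact Or.inl (eg_trans h1 h2')
    · exact Or.inl (eg_trans (eg_trans h1 (eg_symm (eg_trans h2 h1'))) h2')

lemma card_quot_rpair_of_not {r : X → X → Prop} {a b : X} (hab : ¬ EqvGen r a b) :
    Nat.card (Quot r) = Nat.card (Quot (rpair r a b)) + 1 := by
  classical
  have wd : ∀ i j, r i j →
      (if EqvGen r i b then (none : Option (Quot (rpair r a b))) else some (Quot.mk _ i)) =
      (if EqvGen r j b then none else some (Quot.mk _ j)) := by
    intro i j hij
    have hiff : EqvGen r i b ↔ EqvGen r j b :=
      ⟨fun h => eg_trans (eg_symm (EqvGen.rel _ _ hij)) h, fun h => eg_trans (EqvGen.rel _ _ hij) h⟩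
    have hmk : Quot.mk (rpair r a b) i = Quot.mk _ j := Quot.sound (Or.inl hij)
    by_cases h : EqvGen r i b
    · simp [h, hiff.mp h]
    · have h' : ¬ EqvGen r j b := fun hh => h (hiff.mpr hh)
      simp [h, h', hmk]
  set ψ : Quot r → Option (Quot (rpair r a b)) := Quot.lift _ wd with hψ
  have hval : ∀ i, ψ (Quot.mk r i) =
      if EqvGen r i b then none else some (Quot.mk (rpair r a b) i) := fun i => rfl
  have hbij : Function.Bijective ψ := by
    constructor
    · intro q1 q2 hq
      obtain ⟨i, rfl⟩ : ∃ i, q1 = Quot.mk _ i := ⟨q1.out, q1.out_eq.symm⟩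
      obtain ⟨j, rfl⟩ : ∃ j, q2 = Quot.mk _ j := ⟨q2.out, q2.out_eq.symm⟩
      rw [hval, hval] at hq
      by_cases hi : EqvGen r i b <;> by_cases hj : EqvGen r j b
      · exact Quot.eqvGen_sound (eg_trans hi (eg_symm hj))
      · simp [hi, hj] at hq
      · simp [hi, hj] at hq
      · simp only [hi, hj, if_neg, if_false, Option.some.injEq] at hq
        rcases eqvGen_rpair_elim (Quot.eq.mp hq) with h | ⟨h1, h2⟩ | ⟨h1, h2⟩
        · exact Quot.eqvGen_sound h
        · exact absurd (eg_symm h2) hj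
        · exact absurd h1 hi
    · intro x
      match x with
      | none => exact ⟨Quot.mk r b, by rw [hval, if_pos (EqvGen.refl b)]⟩
      | some q =>
        obtain ⟨i, rfl⟩ : ∃ i, q = Quot.mk _ i := ⟨q.out, q.out_eq.symm⟩
        by_cases hi : EqvGen r i b
        · refine ⟨Quot.mk r a, ?_⟩
          rw [hval, if_neg hab]
          congr 1
          exact Quot.eqvGen_sound (eg_trans (EqvGen.rel a b (Or.inr ⟨rfl, rfl⟩))
            ((eg_symm hi).mono (fun x y h => Or.inl h)))
        · exact ⟨Quot.mk r i, by rw [hval, if_neg hi]⟩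
  rw [Nat.card_eq_of_bijective ψ hbij, nat_card_option]

lemma card_quot_rpair_le (r : X → X → Prop) (a b : X) :
    Nat.card (Quot r) ≤ Nat.card (Quot (rpair r a b)) + 1 := by
  by_cases hab : EqvGen r a b
  · have h1 : Nat.card (Quot (rpair r a b)) ≤ Nat.card (Quot r) :=
      card_quot_le (fun i j hij => EqvGen.rel _ _ (Or.inl hij))
    have h2 : Nat.card (Quot r) ≤ Nat.card (Quot (rpair r a b)) := by
      apply card_quot_le
      rintro i j (hij | ⟨rfl, rfl⟩)
      · exact EqvGen.rel _ _ hij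
      · exact hab
    omega
  · exact (card_quot_rpair_of_not hab).le

lemma eqvGen_closed {r : X → X → Prop} {S : Set X} (hS : ∀ i j, r i j → (i ∈ S ↔ j ∈ S)) :
    ∀ {i j}, EqvGen r i j → (i ∈ S ↔ j ∈ S) := by
  intro i j h
  induction h with
  | rel x y hxy => exact hS _ _ hxy
  | refl x => exact Iff.rfl
  | symm x y _ ih => exact ih.symm
  | trans x y z _ _ ih1 ih2 => exact ih1.trans ih2

end QuotLemmas

/-- A perfect matching of `Fin k`, encoded as a fixed-point-free involution. -/
def IsPerfectMatching {k : ℕ} (f : Equiv.Perm (Fin k)) : Prop :=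
  (∀ i, f (f i) = i) ∧ ∀ i, f i ≠ i

/-- A single swap operation between perfect matchings: the pairs `{a,b}, {c,d}`
of `f` are replaced by `{a,c}, {b,d}`, all other pairs being unchanged. -/
def SwapStep {k : ℕ} (f g : Equiv.Perm (Fin k)) : Prop :=
  IsPerfectMatching f ∧ IsPerfectMatching g ∧
  ∃ a b c d : Fin k,
    a ≠ b ∧ a ≠ c ∧ a ≠ d ∧ b ≠ c ∧ b ≠ d ∧ c ≠ d ∧
    f a = b ∧ f c = d ∧ g a = c ∧ g b = d ∧
    ∀ i, i ≠ a → i ≠ b → i ≠ c → i ≠ d → g i = f i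

/-- The swap distance `Δ(α, β)`: the minimum number of swap operations needed to
transform `α` into `β`. -/
noncomputable def swapDist {k : ℕ} (α β : Equiv.Perm (Fin k)) : ℕ :=
  sInf {m : ℕ | ∃ h : ℕ → Equiv.Perm (Fin k),
    h 0 = α ∧ h m = β ∧ ∀ i < m, SwapStep (h i) (h (i + 1))}

/-- The number of cycles of the multigraph union of two perfect matchings
`α, β`: the number of connected components of the relation relating `i` to
`α i` and to `β i`. -/
noncomputable def cycCount {k : ℕ} (α β : Equiv.Perm (Fin k)) : ℕ :=
  Nat.card (Quot (fun i j : Fin k => α i = j ∨ β i = j))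

section Matching

variable {k : ℕ}

/-- The union relation of two matchings. -/
def mrel (α β : Equiv.Perm (Fin k)) : Fin k → Fin k → Prop :=
  fun i j : Fin k => α i = j ∨ β i = j

lemma cycCount_eq (α β : Equiv.Perm (Fin k)) :
    cycCount α β = Nat.card (Quot (mrel α β)) := rfl

lemma SwapStep.symm' {f g : Equiv.Perm (Fin k)} (h : SwapStep f g) : SwapStep g f := by
  obtain ⟨hf, hg, a, b, c, d, hab, hac, had, hbc, hbd, hcd, hfa, hfc, hga, hgb, hrest⟩ := h
  exact ⟨hg, hf, a, c, b, d, hac, hab, had, hbc.symm, hcd, hbd,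
    hga, hgb, hfa, hfc, fun i h1 h2 h3 h4 => (hrest i h1 h3 h2 h4).symm⟩

/-- Each swap step changes the cycle count by at most one (one direction). -/
lemma step_cyc_le {f g β : Equiv.Perm (Fin k)} (h : SwapStep f g) :
    cycCount f β ≤ cycCount g β + 1 := by
  obtain ⟨hf, hg, a, b, c, d, hab, hac, had, hbc, hbd, hcd, hfa, hfc, hga, hgb, hrest⟩ := h
  have e1 : EqvGen (rpair (mrel f β) a c) b a :=
    EqvGen.rel _ _ (Or.inl (Or.inl (by rw [← hfa, hf.1])))
  have e2 : EqvGen (rpair (mrel f β) a c) a c := EqvGen.rel _ _ (Or.inr ⟨rfl, rfl⟩)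
  have e3 : EqvGen (rpair (mrel f β) a c) c d := EqvGen.rel _ _ (Or.inl (Or.inl hfc))
  have key : ∀ i j, mrel g β i j → EqvGen (rpair (mrel f β) a c) i j := by
    rintro i j (hgij | hbij)
    · by_cases hia : i = a
      · rw [hia, hga] at hgij; subst hgij; rw [hia]; exact e2
      · by_cases hic : i = c
        · have hca : g c = a := by rw [← hga, hg.1]
          rw [hic, hca] at hgij; subst hgij; rw [hic]
          exact eg_symm e2
        · by_cases hib : i = b
          · rw [hib, hgb] at hgij; subst hgij; rw [hib]
            exact eg_trans (eg_trans e1 e2) e3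
          · by_cases hid : i = d
            · have hdb : g d = b := by rw [← hgb, hg.1]
              rw [hid, hdb] at hgij; subst hgij; rw [hid]
              exact eg_symm (eg_trans (eg_trans e1 e2) e3)
            · rw [hrest i hia hib hic hid] at hgij
              exact EqvGen.rel _ _ (Or.inl (Or.inl hgij))
    · exact EqvGen.rel _ _ (Or.inl (Or.inr hbij))
  have h1 : Nat.card (Quot (rpair (mrel f β) a c)) ≤ Nat.card (Quot (mrel g β)) :=
    card_quot_le key
  have h2 : Nat.card (Quot (mrel f β)) ≤ Nat.card (Quot (rpair (mrel f β) a c)) + 1 :=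
    card_quot_rpair_le (mrel f β) a c
  rw [cycCount_eq, cycCount_eq]
  omega

lemma step_cyc_ge {f g β : Equiv.Perm (Fin k)} (h : SwapStep f g) :
    cycCount g β ≤ cycCount f β + 1 := step_cyc_le h.symm'

/-- `cyc(β,β) * 2 = k`. -/
lemma cyc_diag {β : Equiv.Perm (Fin k)} (hβ : IsPerfectMatching β) :
    cycCount β β * 2 = k := by
  classical
  set F : Fin k → Quot (mrel β β) × Bool :=
    fun i => (Quot.mk (mrel β β) i, decide (i < β i)) with hF
  have hbij : Function.Bijective F := by
    constructor
    · intro i j hij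
      simp only [hF, Prod.mk.injEq] at hij
      obtain ⟨hq, hb⟩ := hij
      have hS : ∀ x y, mrel β β x y →
          (x ∈ {z : Fin k | z = i ∨ z = β i} ↔ y ∈ {z : Fin k | z = i ∨ z = β i}) := by
        rintro x y (hxy | hxy) <;>
        · subst hxy
          simp only [Set.mem_setOf_eq]
          constructor
          · rintro (rfl | rfl)
            · exact Or.inr rfl
            · exact Or.inl (hβ.1 i)
          · rintro (h | h)
            · exact Or.inr (by rw [← h, hβ.1])
            · exact Or.inl (β.injective h)
      have hj : j = i ∨ j = β i := (eqvGen_closed hS (Quot.eq.mp hq)).mp (Or.inl rfl)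
      rcases hj with rfl | rfl
      · rfl
      · exfalso
        have hiff : i < β i ↔ β i < i := by
          have := decide_eq_decide.mp hb
          rwa [hβ.1] at this
        have hne : i ≠ β i := fun e => hβ.2 i e.symm
        rcases lt_trichotomy i (β i) with h | h | h
        · exact absurd (hiff.mp h) (lt_asymm h)
        · exact hne h
        · exact absurd (hiff.mpr h) (lt_asymm h)
    · rintro ⟨q, bb⟩
      obtain ⟨i, rfl⟩ : ∃ i, q = Quot.mk (mrel β β) i := ⟨q.out, q.out_eq.symm⟩
      have hne : i ≠ β i := fun e => hβ.2 i e.symm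
      have hrel : mrel β β i (β i) := Or.inl rfl
      have hmk : Quot.mk (mrel β β) (β i) = Quot.mk (mrel β β) i :=
        (Quot.sound hrel).symm
      by_cases hlt : i < β i
      · cases bb
        · refine ⟨β i, ?_⟩
          simp only [hF, Prod.mk.injEq]
          exact ⟨hmk, by simp [hβ.1, lt_asymm hlt]⟩
        · exact ⟨i, by simp [hF, hlt]⟩
      · have hlt' : β i < i := lt_of_le_of_ne (not_lt.mp hlt) (fun e => hne e.symm)
        cases bb
        · exact ⟨i, by simp [hF, hlt]⟩
        · refine ⟨β i, ?_⟩
          simp only [hF, Prod.mk.injEq]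
          exact ⟨hmk, by simp [hβ.1, hlt']⟩
  have hcard := Nat.card_eq_of_bijective F hbij
  rw [Nat.card_prod] at hcard
  have hbool : Nat.card Bool = 2 := by simp [Nat.card_eq_fintype_card]
  have hfin : Nat.card (Fin k) = k := by simp
  rw [hbool, hfin] at hcard
  rw [cycCount_eq]
  omega

/-- Any cycle count is at most `k / 2`. -/
lemma cyc_le_half {α β : Equiv.Perm (Fin k)} (hα : IsPerfectMatching α) :
    cycCount α β * 2 ≤ k := by
  classical
  set F : Quot (mrel α β) × Bool → Fin k :=
    fun p => if p.2 then p.1.out else α p.1.out with hF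
  have hout : ∀ x : Fin k, Quot.mk (mrel α β) (α x) = Quot.mk (mrel α β) x := by
    intro x
    have hrel : mrel α β x (α x) := Or.inl rfl
    exact (Quot.sound hrel).symm
  have hinj : Function.Injective F := by
    rintro ⟨q, b⟩ ⟨q', b'⟩ h
    cases b <;> cases b' <;>
      simp only [hF, Bool.false_eq_true, if_true, if_false] at h
    · have hq : q = q' := by
        rw [← q.out_eq, ← q'.out_eq, α.injective h]
      simp only [Prod.mk.injEq]
      exact ⟨hq, trivial⟩
    · have hq : q = q' := by
        rw [← q.out_eq, ← q'.out_eq, ← h, hout]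
      rw [← hq] at h
      exact absurd h (hα.2 _)
    · have hq : q = q' := by
        rw [← q.out_eq, ← q'.out_eq, h, hout]
      rw [hq] at h
      exact absurd h.symm (hα.2 _)
    · have hq : q = q' := by
        rw [← q.out_eq, ← q'.out_eq, h]
      simp only [Prod.mk.injEq]
      exact ⟨hq, trivial⟩
  have hcard := Nat.card_le_card_of_injective F hinj
  rw [Nat.card_prod] at hcard
  have hbool : Nat.card Bool = 2 := by simp [Nat.card_eq_fintype_card]
  have hfin : Nat.card (Fin k) = k := by simp
  rw [hbool, hfin] at hcard
  rw [cycCount_eq]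
  omega

/-- If `α ≠ β`, there is a swap step from `α` increasing the cycle count. -/
lemma exists_step {α β : Equiv.Perm (Fin k)} (hα : IsPerfectMatching α)
    (hβ : IsPerfectMatching β) (hne : α ≠ β) :
    ∃ g, SwapStep α g ∧ cycCount g β = cycCount α β + 1 := by
  classical
  obtain ⟨a, ha⟩ := not_forall.mp (fun h => hne (Equiv.ext h))
  obtain ⟨b, hb⟩ : ∃ b, α a = b := ⟨_, rfl⟩
  obtain ⟨c, hc⟩ : ∃ c, β a = c := ⟨_, rfl⟩
  obtain ⟨d, hd⟩ : ∃ d, α c = d := ⟨_, rfl⟩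
  have hab : a ≠ b := fun e => hα.2 a (by rw [hb, ← e])
  have hac : a ≠ c := fun e => hβ.2 a (by rw [hc, ← e])
  have hbc : b ≠ c := fun e => ha (by rw [hb, hc, e])
  have had : a ≠ d := fun e => hbc (by rw [← hb, e, ← hd, hα.1])
  have hbd : b ≠ d := fun e => hac (α.injective (by rw [hb, hd, e]))
  have hcd : c ≠ d := fun e => hα.2 c (by rw [hd, ← e])
  have hba : α b = a := by rw [← hb, hα.1]
  have hdc : α d = c := by rw [← hd, hα.1]
  have hca : β c = a := by rw [← hc, hβ.1]
  set s : Equiv.Perm (Fin k) := Equiv.swap b c with hs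
  set g : Equiv.Perm (Fin k) := s * α * s with hg
  have hsa : s a = a := Equiv.swap_apply_of_ne_of_ne hab hac
  have hsd : s d = d := Equiv.swap_apply_of_ne_of_ne hbd.symm hcd.symm
  have happ : ∀ x, g x = s (α (s x)) := fun x => rfl
  have hga : g a = c := by rw [happ, hsa, hb, hs, Equiv.swap_apply_left]
  have hgb : g b = d := by rw [happ, hs, Equiv.swap_apply_left, ← hs, hd, hsd]
  have hgc : g c = a := by rw [happ, hs, Equiv.swap_apply_right, ← hs, hba, hsa]
  have hgd : g d = b := by rw [happ, hsd, hdc, hs, Equiv.swap_apply_right]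
  have hrest : ∀ i, i ≠ a → i ≠ b → i ≠ c → i ≠ d → g i = α i := by
    intro i hia hib hic hid
    have hsi : s i = i := Equiv.swap_apply_of_ne_of_ne hib hic
    have h1 : α i ≠ b := fun e => hia (α.injective (by rw [e, hb]))
    have h2 : α i ≠ c := fun e => hid (α.injective (by rw [e, hdc]))
    rw [happ, hsi, Equiv.swap_apply_of_ne_of_ne h1 h2]
  have hgPM : IsPerfectMatching g := by
    constructor
    · intro x
      rw [happ, happ, Equiv.swap_apply_self, hα.1, Equiv.swap_apply_self]
    · intro x e
      apply hα.2 (s x)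
      have := congrArg s e
      rwa [happ, Equiv.swap_apply_self] at this
  have hstep : SwapStep α g :=
    ⟨hα, hgPM, a, b, c, d, hab, hac, had, hbc, hbd, hcd, hb, hd, hga, hgb,
      fun i h1 h2 h3 h4 => hrest i h1 h2 h3 h4⟩
  refine ⟨g, hstep, ?_⟩
  -- the class of `a` in the union of `g` and `β` is `{a, c}`
  have hclosed : ∀ x y, mrel g β x y →
      (x ∈ {z : Fin k | z = a ∨ z = c} ↔ y ∈ {z : Fin k | z = a ∨ z = c}) := by
    rintro x y hxy
    simp only [Set.mem_setOf_eq]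
    constructor
    · rintro (rfl | rfl)
      · rcases hxy with h | h
        · rw [hga] at h; exact Or.inr h.symm
        · rw [hc] at h; exact Or.inr h.symm
      · rcases hxy with h | h
        · rw [hgc] at h; exact Or.inl h.symm
        · rw [hca] at h; exact Or.inl h.symm
    · rintro (rfl | rfl)
      · rcases hxy with h | h
        · exact Or.inr (by rw [← hgPM.1 x, h, hga])
        · exact Or.inr (by rw [← hβ.1 x, h, hc])
      · rcases hxy with h | h
        · exact Or.inl (by rw [← hgPM.1 x, h, hgc])
        · exact Or.inl (by rw [← hβ.1 x, h, hca])
  have hnab : ¬ EqvGen (mrel g β) a b := by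
    intro h
    have := (eqvGen_closed hclosed h).mp (Or.inl rfl)
    rcases this with e | e
    · exact hab e.symm
    · exact hbc e
  have hstrict : Nat.card (Quot (mrel g β)) =
      Nat.card (Quot (rpair (mrel g β) a b)) + 1 := card_quot_rpair_of_not hnab
  -- the pair-augmented union of `g, β` generates the same components as `α, β`
  have hA : ∀ i j, rpair (mrel g β) a b i j → EqvGen (mrel α β) i j := by
    rintro i j ((hgij | hbij) | ⟨rfl, rfl⟩)
    · by_cases hia : i = a
      · rw [hia, hga] at hgij; subst hgij; rw [hia]
        exact EqvGen.rel _ _ (Or.inr hc)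
      · by_cases hic : i = c
        · rw [hic, hgc] at hgij; subst hgij; rw [hic]
          exact eg_symm (EqvGen.rel _ _ (Or.inr hc))
        · by_cases hib : i = b
          · rw [hib, hgb] at hgij; subst hgij; rw [hib]
            exact eg_trans (eg_trans (EqvGen.rel _ _ (Or.inl hba))
              (EqvGen.rel _ _ (Or.inr hc))) (EqvGen.rel _ _ (Or.inl hd))
          · by_cases hid : i = d
            · rw [hid, hgd] at hgij; subst hgij; rw [hid]
              exact eg_symm (eg_trans (eg_trans (EqvGen.rel _ _ (Or.inl hba))
                (EqvGen.rel _ _ (Or.inr hc))) (EqvGen.rel _ _ (Or.inl hd)))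
            · rw [hrest i hia hib hic hid] at hgij
              exact EqvGen.rel _ _ (Or.inl hgij)
    · exact EqvGen.rel _ _ (Or.inr hbij)
    · exact EqvGen.rel _ _ (Or.inl hb)
  have hB : ∀ i j, mrel α β i j → EqvGen (rpair (mrel g β) a b) i j := by
    have p1 : EqvGen (rpair (mrel g β) a b) a b := EqvGen.rel _ _ (Or.inr ⟨rfl, rfl⟩)
    have p2 : EqvGen (rpair (mrel g β) a b) c a := EqvGen.rel _ _ (Or.inl (Or.inl hgc))
    have p3 : EqvGen (rpair (mrel g β) a b) b d := EqvGen.rel _ _ (Or.inl (Or.inl hgb))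
    rintro i j (hαij | hbij)
    · by_cases hia : i = a
      · rw [hia, hb] at hαij; subst hαij; rw [hia]; exact p1
      · by_cases hib : i = b
        · rw [hib, hba] at hαij; subst hαij; rw [hib]; exact eg_symm p1
        · by_cases hic : i = c
          · rw [hic, hd] at hαij; subst hαij; rw [hic]
            exact eg_trans (eg_trans p2 p1) p3
          · by_cases hid : i = d
            · rw [hid, hdc] at hαij; subst hαij; rw [hid]
              exact eg_symm (eg_trans (eg_trans p2 p1) p3)
            · rw [← hrest i hia hib hic hid] at hαij
              exact EqvGen.rel _ _ (Or.inl (Or.inl hαij))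
    · exact EqvGen.rel _ _ (Or.inl (Or.inr hbij))
  have heq : Nat.card (Quot (rpair (mrel g β) a b)) = Nat.card (Quot (mrel α β)) :=
    le_antisymm (card_quot_le hB) (card_quot_le hA)
  rw [cycCount_eq, cycCount_eq, hstrict, heq]

lemma chain_cyc {β : Equiv.Perm (Fin k)} :
    ∀ m (h : ℕ → Equiv.Perm (Fin k)), (∀ i < m, SwapStep (h i) (h (i + 1))) →
      cycCount (h m) β ≤ cycCount (h 0) β + m := by
  intro m
  induction m with
  | zero => intro h _; simp
  | succ n ih =>
    intro h hs
    have h1 := ih h (fun i hi => hs i (by omega))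
    have h2 : cycCount (h (n + 1)) β ≤ cycCount (h n) β + 1 :=
      step_cyc_ge (hs n (by omega))
    omega

lemma exists_chain (hk : Even k) {β : Equiv.Perm (Fin k)} (hβ : IsPerfectMatching β) :
    ∀ n (α : Equiv.Perm (Fin k)), IsPerfectMatching α → n = k / 2 - cycCount α β →
    ∃ h : ℕ → Equiv.Perm (Fin k), h 0 = α ∧ h n = β ∧ ∀ i < n, SwapStep (h i) (h (i + 1)) := by
  intro n
  induction n using Nat.strong_induction_on with
  | _ n ih =>
    intro α hα hn
    by_cases hne : α = β
    · subst hne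
      have hd := cyc_diag hα
      obtain ⟨K, hK⟩ := hk
      have h0 : n = 0 := by omega
      subst h0
      exact ⟨fun _ => α, rfl, rfl, fun i hi => absurd hi (by omega)⟩
    · obtain ⟨g, hstep, hcyc⟩ := exists_step hα hβ hne
      have hgPM : IsPerfectMatching g := hstep.2.1
      have hg2 : cycCount g β * 2 ≤ k := cyc_le_half hgPM
      obtain ⟨K, hK⟩ := hk
      have hn1 : 1 ≤ n := by omega
      have hlt : n - 1 < n := by omega
      obtain ⟨h', h'0, h'n, h's⟩ := ih (n - 1) hlt g hgPM (by omega)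
      refine ⟨fun t => if t = 0 then α else h' (t - 1), by simp, ?_, ?_⟩
      · have : ¬ (n = 0) := by omega
        simp only [this, if_false]
        exact h'n
      · intro i hi
        by_cases hi0 : i = 0
        · subst hi0
          simp only [if_pos rfl, if_neg (by omega : ¬ (0 + 1 = 0))]
          have : (0 + 1 - 1) = 0 := rfl
          rw [this, h'0]
          exact hstep
        · simp only [if_neg hi0, if_neg (by omega : ¬ (i + 1 = 0))]
          have := h's (i - 1) (by omega)
          have e1 : i - 1 + 1 = i := by omega
          have e2 : i + 1 - 1 = i := by omega
          rw [e1] at this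
          rw [e2]
          exact this

end Matching

/-- **Swap distance formula.**  For perfect matchings `α, β` of `{1, …, k}` with
`k` even, the swap distance equals `k/2 - |cyc(α, β)|`. -/
theorem swapDist_eq {k : ℕ} (hk : Even k) (α β : Equiv.Perm (Fin k))
    (hα : IsPerfectMatching α) (hβ : IsPerfectMatching β) :
    swapDist α β = k / 2 - cycCount α β := by
  obtain ⟨h, h0, hn, hs⟩ := exists_chain hk hβ (k / 2 - cycCount α β) α hα rfl
  have hmem : (k / 2 - cycCount α β) ∈ {m : ℕ | ∃ h : ℕ → Equiv.Perm (Fin k),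
      h 0 = α ∧ h m = β ∧ ∀ i < m, SwapStep (h i) (h (i + 1))} := ⟨h, h0, hn, hs⟩
  unfold swapDist
  apply le_antisymm
  · exact Nat.sInf_le hmem
  · apply le_csInf ⟨_, hmem⟩
    rintro m ⟨h2, h20, h2m, h2s⟩
    have hch := chain_cyc (β := β) m h2 h2s
    rw [h20, h2m] at hch
    have hd := cyc_diag hβ
    obtain ⟨K, hK⟩ := hk
    omega
end

section
/- Let α be a connected multigraph containing a bridge edge e = {u,v}, so that deleting e splits the edge set into parts spanning subgraphs α_1 (containing u) and α_2 (containing v), with α_1 2-edge-connected. Let A be an n×n symmetric matrix. Then the scalar graph polynomial w_α(A) = Σ_{φ: V(α) → [n]} ∏_{{x,y} ∈ E(α)} A[φ(x), φ(y)] satisfies |w_α(A)| ≤ ‖w_{α_1}(A)‖₂ · ‖A · w_{α_2}(A)‖₂, where w_{α_i}(A) ∈ ℝⁿ denotes the vector graph polynomial of α_i rooted at u (resp. v): w_{α_i}(A)[j] = Σ_{φ: V(α_i) → [n], φ(root) = j} ∏_{{x,y} ∈ E(α_i)} A[φ(x), φ(y)]. -/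
/-- A finite rooted multigraph. -/
structure RootedMultigraph where
  V : Type
  E : Type
  [fintypeV : Fintype V]
  [fintypeE : Fintype E]
  [decV : DecidableEq V]
  ends : E → V × V
  root : V

attribute [instance] RootedMultigraph.fintypeV RootedMultigraph.fintypeE RootedMultigraph.decV

namespace RootedMultigraph

/-- Reachability using only edges in the set `S`. -/
def ReachableOn (G : RootedMultigraph) (S : Set G.E) : G.V → G.V → Prop :=
  Relation.ReflTransGen (fun x y => ∃ e ∈ S, G.ends e = (x, y) ∨ G.ends e = (y, x))

/-- A multigraph is connected if every two vertices are joined by a walk. -/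
def Connected (G : RootedMultigraph) : Prop :=
  ∀ u v : G.V, G.ReachableOn Set.univ u v

/-- 2-edge-connectedness: connected and bridgeless. -/
def TwoEdgeConnected (G : RootedMultigraph) : Prop :=
  G.Connected ∧ ∀ e : G.E, G.ReachableOn {f | f ≠ e} (G.ends e).1 (G.ends e).2

/-- The vector graph polynomial of a rooted multigraph: its `j`-th entry sums
over all labelings `φ : V → [n]` with `φ(root) = j` the products
`∏_{{x,y} ∈ E} A[φ(x), φ(y)]`. -/
noncomputable def wvec (G : RootedMultigraph) {n : ℕ}
    (A : Matrix (Fin n) (Fin n) ℝ) : Fin n → ℝ := fun j =>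
  ∑ φ : G.V → Fin n,
    if φ G.root = j then ∏ e : G.E, A (φ (G.ends e).1) (φ (G.ends e).2) else 0

end RootedMultigraph

/-- The scalar graph polynomial of the multigraph `α` obtained by joining the
rooted multigraphs `G₁` (rooted at `u`) and `G₂` (rooted at `v`) by a bridge
edge `e* = {u, v}`:  `w_α(A) = Σ_φ ∏_{{x,y} ∈ E(α)} A[φ(x), φ(y)]`. -/
noncomputable def wBridge (G₁ G₂ : RootedMultigraph) {n : ℕ}
    (A : Matrix (Fin n) (Fin n) ℝ) : ℝ :=
  ∑ φ : G₁.V ⊕ G₂.V → Fin n,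
    (∏ e : G₁.E, A (φ (Sum.inl (G₁.ends e).1)) (φ (Sum.inl (G₁.ends e).2))) *
      A (φ (Sum.inl G₁.root)) (φ (Sum.inr G₂.root)) *
      ∏ e : G₂.E, A (φ (Sum.inr (G₂.ends e).1)) (φ (Sum.inr (G₂.ends e).2))

/-- Euclidean norm of a vector in `ℝⁿ`. -/
noncomputable def norm2 {n : ℕ} (v : Fin n → ℝ) : ℝ :=
  Real.sqrt (∑ j, v j ^ 2)

lemma sum_wvec_mul (G : RootedMultigraph) {n : ℕ} (A : Matrix (Fin n) (Fin n) ℝ)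
    (f : Fin n → ℝ) :
    ∑ j, G.wvec A j * f j =
      ∑ φ : G.V → Fin n, (∏ e : G.E, A (φ (G.ends e).1) (φ (G.ends e).2)) * f (φ G.root) := by
  unfold RootedMultigraph.wvec
  simp only [Finset.sum_mul, ite_mul, zero_mul]
  rw [Finset.sum_comm]
  simp

lemma wBridge_eq (G₁ G₂ : RootedMultigraph) {n : ℕ} (A : Matrix (Fin n) (Fin n) ℝ) :
    wBridge G₁ G₂ A = ∑ j, G₁.wvec A j * (A.mulVec (G₂.wvec A)) j := by
  rw [sum_wvec_mul]
  unfold wBridge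
  rw [← Equiv.sum_comp (Equiv.sumArrowEquivProdArrow G₁.V G₂.V (Fin n)).symm,
    Fintype.sum_prod_type]
  refine Finset.sum_congr rfl fun φ₁ _ => ?_
  have : (A.mulVec (G₂.wvec A)) (φ₁ G₁.root) = ∑ j, G₂.wvec A j * A (φ₁ G₁.root) j := by
    simp [Matrix.mulVec, dotProduct, mul_comm]
  rw [this, sum_wvec_mul, Finset.mul_sum]
  refine Finset.sum_congr rfl fun φ₂ _ => ?_
  simp [Equiv.sumArrowEquivProdArrow]
  ring

/-- **Cauchy–Schwarz across a bridge.**  Let `α` be a connected multigraph with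
a bridge edge `{u, v}` whose deletion splits it into a 2-edge-connected part
`α₁ = G₁` containing `u` and a part `α₂ = G₂` containing `v`.  Then for any
symmetric matrix `A`,
`|w_α(A)| ≤ ‖w_{α₁}(A)‖₂ · ‖A · w_{α₂}(A)‖₂`,
where `w_{α_i}(A)` is the vector graph polynomial of `α_i` rooted at `u`
(resp. `v`). -/
theorem wBridge_le_cauchySchwarz (G₁ G₂ : RootedMultigraph) {n : ℕ}
    (A : Matrix (Fin n) (Fin n) ℝ) (hA : A.IsSymm)
    (h₁ : G₁.TwoEdgeConnected) (h₂ : G₂.Connected) :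
    |wBridge G₁ G₂ A| ≤
      norm2 (G₁.wvec A) * norm2 (A.mulVec (G₂.wvec A)) := by
  rw [wBridge_eq]
  set u := G₁.wvec A
  set v := A.mulVec (G₂.wvec A)
  have h := Finset.sum_mul_sq_le_sq_mul_sq Finset.univ u v
  have h1 : |∑ j, u j * v j| = Real.sqrt ((∑ j, u j * v j) ^ 2) := by
    rw [Real.sqrt_sq_eq_abs]
  rw [h1]
  unfold norm2
  rw [← Real.sqrt_mul (by positivity)]
  exact Real.sqrt_le_sqrt h
end
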